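/- For every k_0 large enough (depending on the coefficients), if integers a_1,...,a_q, b_1,...,b_q, c satisfy \sum_{i=1}^q (a_i z_i + b_i z_{i+q}) = c, then for all k \geq k_0 one has \sum_{i=1}^q (a_i p_i^{-N^{2k}} + b_i p_i^{-N^{2k+1}}) = 0. -/

import Mathlib

/-!
Write `s m = ∑ᵢ (aᵢ pᵢ^(-N^(2m)) + bᵢ pᵢ^(-N^(2m+1)))` and `T k = ∑_{m > k} s m`, so that `T 0 = c`.
With `D = ∏ᵢ pᵢ`, the number `D^(N^(2k+1)) T k = D^(N^(2k+1)) (c - s 1 - ⋯ - s k)` is an integer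
(an element of `⊥ : Subring ℝ`), while lacunarity gives `|T k| ≤ 2 (∑ᵢ |aᵢ| + |bᵢ|) p₁^(-N^(2k+2))`.
The hypothesis on `N` gives `D ≤ p_q^q < p₁^N`, so these integers are bounded by a multiple of
`(D / p₁^N)^(N^(2k+1)) → 0`. Hence `T k = 0` for large `k`, and then `s k = T (k-1) - T k = 0`.
-/

open Filter Topology Finset

lemma inv_pow_le_inv_pow_of_le_of_le {x y : ℝ} {e f : ℕ} (hx : 1 ≤ x) (hxy : x ≤ y) (hef : e ≤ f) :
    (y ^ f)⁻¹ ≤ (x ^ e)⁻¹ :=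
  inv_anti₀ (by positivity)
    ((pow_le_pow_right₀ hx hef).trans (pow_le_pow_left₀ (by linarith) hxy f))

lemma summable_inv_pow_comp {x : ℝ} (hx : 1 < x) {e : ℕ → ℕ} (he : ∀ j, j ≤ e j) :
    Summable fun j => (x ^ e j)⁻¹ := by
  refine Summable.of_nonneg_of_le (fun j => by positivity) (fun j => ?_)
    (summable_geometric_of_lt_one (by positivity) (inv_lt_one_of_one_lt₀ hx))
  rw [inv_pow]
  exact inv_pow_le_inv_pow_of_le hx.le (he j)

lemma summable_inv_pow_pow {x : ℝ} {N : ℕ} (hx : 1 < x) (hN : 2 ≤ N) {e : ℕ → ℕ}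
    (he : ∀ j, j ≤ e j) :
    Summable fun j => (x ^ N ^ e j)⁻¹ :=
  summable_inv_pow_comp hx fun j => (he j).trans (Nat.lt_pow_self hN).le

lemma Nat.pow_add_le_pow_add {N : ℕ} (hN : 2 ≤ N) (c j : ℕ) : N ^ c + j ≤ N ^ (c + j) :=
  calc N ^ c + j ≤ N ^ c * (j + 1) := by nlinarith [Nat.one_le_pow c N (by omega)]
    _ ≤ N ^ c * N ^ j := Nat.mul_le_mul_left _ (Nat.lt_pow_self hN)
    _ = N ^ (c + j) := (pow_add N c j).symm

lemma abs_tsum_le_of_abs_le_inv_pow {x C : ℝ} {f : ℕ → ℝ} {e : ℕ → ℕ} (hx : 2 ≤ x) (hC : 0 ≤ C)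
    (he : ∀ j, e 0 + j ≤ e j) (hf : ∀ j, |f j| ≤ C * (x ^ e j)⁻¹) :
    |∑' j, f j| ≤ 2 * C * (x ^ e 0)⁻¹ := by
  have hgeom : HasSum (fun j => C * (x ^ e 0)⁻¹ * (1 / 2) ^ j) (2 * C * (x ^ e 0)⁻¹) := by
    rw [show 2 * C * (x ^ e 0)⁻¹ = C * (x ^ e 0)⁻¹ * 2 by ring]
    exact hasSum_geometric_two.mul_left _
  refine (Real.norm_eq_abs _).symm.trans_le (tsum_of_norm_bounded hgeom fun j => ?_)
  calc ‖f j‖ ≤ C * (x ^ e j)⁻¹ := hf j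
    _ ≤ C * (x ^ (e 0 + j))⁻¹ :=
        mul_le_mul_of_nonneg_left (inv_pow_le_inv_pow_of_le (by linarith) (he j)) hC
    _ ≤ C * (x ^ e 0)⁻¹ * (1 / 2) ^ j := by
        rw [pow_add, mul_inv, ← mul_assoc, one_div, inv_pow]
        gcongr

lemma eventually_eq_zero_of_mul_mem_bot {d x : ℕ → ℝ} (hd : ∀ k, d k ≠ 0)
    (hint : ∀ k, d k * x k ∈ (⊥ : Subring ℝ)) (hlim : Tendsto (fun k => d k * x k) atTop (𝓝 0)) :
    ∀ᶠ k in atTop, x k = 0 := by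
  filter_upwards [hlim.abs.eventually_lt_const (by norm_num : (|0| : ℝ) < 1)] with k hk
  obtain ⟨n, hn⟩ := Subring.mem_bot.1 (hint k)
  have hn0 : n = 0 := by
    rw [← hn, ← Int.cast_abs] at hk
    exact Int.abs_lt_one_iff.1 (by exact_mod_cast hk)
  rw [hn0, Int.cast_zero, eq_comm, mul_eq_zero] at hn
  exact hn.resolve_left (hd k)

lemma natCast_pow_mul_inv_pow_mem_bot {d p E e : ℕ} (hp : p ≠ 0) (hdvd : p ∣ d) (he : e ≤ E) :
    (d : ℝ) ^ E * ((p : ℝ) ^ e)⁻¹ ∈ (⊥ : Subring ℝ) := by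
  have hdvd' : p ^ e ∣ d ^ E := (pow_dvd_pow_of_dvd hdvd e).trans (pow_dvd_pow d he)
  have hcast := Nat.cast_div (K := ℝ) hdvd' (by positivity)
  push_cast at hcast
  rw [← div_eq_mul_inv, ← hcast]
  exact natCast_mem _ _

lemma pow_lt_pow_of_mul_log_lt {x y : ℝ} {m n : ℕ} (hx : 0 < x) (hy : 0 < y)
    (h : m * Real.log x < n * Real.log y) : x ^ m < y ^ n := by
  rwa [← Real.log_lt_log_iff (by positivity) (by positivity), Real.log_pow, Real.log_pow]

namespace LacunarySum

variable {q : ℕ} (p : Fin q → ℕ) (N : ℕ) (a b : Fin q → ℤ)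

noncomputable def term (m : ℕ) : ℝ :=
  ∑ i, ((a i : ℝ) * ((p i : ℝ) ^ (N ^ (2 * m)))⁻¹ + (b i : ℝ) * ((p i : ℝ) ^ (N ^ (2 * m + 1)))⁻¹)

noncomputable def tail (k : ℕ) : ℝ := ∑' j, term p N a b (j + k + 1)

noncomputable def coeffNorm : ℝ := ∑ i, (|(a i : ℝ)| + |(b i : ℝ)|)

variable {p N}

lemma tail_zero_eq (hp : ∀ i, 1 < p i) (hN : 2 ≤ N) :
    tail p N a b 0 = ∑ i, ((a i : ℝ) * ∑' j, ((p i : ℝ) ^ (N ^ (2 * (j + 1))))⁻¹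
      + (b i : ℝ) * ∑' j, ((p i : ℝ) ^ (N ^ (2 * (j + 1) + 1)))⁻¹) := by
  have hp' i : (1 : ℝ) < p i := by exact_mod_cast hp i
  have hA i := summable_inv_pow_pow (hp' i) hN (e := fun j => 2 * (j + 1)) (by omega)
  have hB i := summable_inv_pow_pow (hp' i) hN (e := fun j => 2 * (j + 1) + 1) (by omega)
  simp only [tail, term, add_zero]
  rw [Summable.tsum_finsetSum fun i _ => ((hA i).mul_left _).add ((hB i).mul_left _)]
  refine sum_congr rfl fun i _ => ?_
  rw [((hA i).mul_left _).tsum_add ((hB i).mul_left _), tsum_mul_left, tsum_mul_left]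

lemma summable_term_succ (hp : ∀ i, 1 < p i) (hN : 2 ≤ N) :
    Summable fun j => term p N a b (j + 1) := by
  have hp' i : (1 : ℝ) < p i := by exact_mod_cast hp i
  exact summable_sum fun i _ =>
    ((summable_inv_pow_pow (hp' i) hN (e := fun j => 2 * (j + 1)) (by omega)).mul_left _).add
      ((summable_inv_pow_pow (hp' i) hN (e := fun j => 2 * (j + 1) + 1) (by omega)).mul_left _)

lemma sum_add_tail (hp : ∀ i, 1 < p i) (hN : 2 ≤ N) (k : ℕ) :
    ∑ m ∈ range k, term p N a b (m + 1) + tail p N a b k = tail p N a b 0 :=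
  (summable_term_succ a b hp hN).sum_add_tsum_nat_add k

lemma term_succ_eq_sub (hp : ∀ i, 1 < p i) (hN : 2 ≤ N) (k : ℕ) :
    term p N a b (k + 1) = tail p N a b k - tail p N a b (k + 1) := by
  have h₁ := sum_add_tail a b hp hN k
  have h₂ := sum_add_tail a b hp hN (k + 1)
  rw [sum_range_succ] at h₂
  linarith

lemma abs_term_le {P : ℕ} (hP : 1 ≤ P) (hle : ∀ i, P ≤ p i) (hN : 1 ≤ N) (m : ℕ) :
    |term p N a b m| ≤ coeffNorm a b * ((P : ℝ) ^ (N ^ (2 * m)))⁻¹ := by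
  have hP' : (1 : ℝ) ≤ P := by exact_mod_cast hP
  have hle' i : (P : ℝ) ≤ p i := by exact_mod_cast hle i
  rw [term, coeffNorm, sum_mul]
  refine (abs_sum_le_sum_abs _ _).trans (sum_le_sum fun i _ => (abs_add_le _ _).trans ?_)
  rw [abs_mul, abs_mul, abs_inv, abs_inv, abs_pow, abs_pow, Nat.abs_cast, add_mul]
  exact add_le_add
    (mul_le_mul_of_nonneg_left (inv_pow_le_inv_pow_of_le_of_le hP' (hle' i) le_rfl) (abs_nonneg _))
    (mul_le_mul_of_nonneg_left (inv_pow_le_inv_pow_of_le_of_le hP' (hle' i)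
      (Nat.pow_le_pow_right hN (by omega))) (abs_nonneg _))

lemma abs_tail_le {P : ℕ} (hP : 2 ≤ P) (hle : ∀ i, P ≤ p i) (hN : 2 ≤ N) (k : ℕ) :
    |tail p N a b k| ≤ 2 * coeffNorm a b * ((P : ℝ) ^ (N ^ (2 * (k + 1))))⁻¹ := by
  have hlacunary j : N ^ (2 * (0 + k + 1)) + j ≤ N ^ (2 * (j + k + 1)) :=
    (Nat.pow_add_le_pow_add hN _ _).trans (Nat.pow_le_pow_right (by omega) (by omega))
  have h := abs_tsum_le_of_abs_le_inv_pow (e := fun j => N ^ (2 * (j + k + 1)))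
    (by exact_mod_cast hP) (sum_nonneg fun i _ => by positivity) hlacunary
    (fun j => abs_term_le a b (by omega) hle (by omega) _)
  rwa [zero_add] at h

lemma pow_mul_term_mem_bot (hp : ∀ i, p i ≠ 0) (hN : 1 ≤ N) {m E : ℕ} (hE : N ^ (2 * m + 1) ≤ E) :
    ((∏ i, p i : ℕ) : ℝ) ^ E * term p N a b m ∈ (⊥ : Subring ℝ) := by
  rw [term, mul_sum]
  refine Subring.sum_mem _ fun i _ => ?_
  have hdvd := dvd_prod_of_mem p (mem_univ i)
  rw [mul_add, mul_left_comm, mul_left_comm _ (b i : ℝ)]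
  exact add_mem
    (mul_mem (intCast_mem _ _) (natCast_pow_mul_inv_pow_mem_bot (hp i) hdvd
      ((Nat.pow_le_pow_right hN (by omega)).trans hE)))
    (mul_mem (intCast_mem _ _) (natCast_pow_mul_inv_pow_mem_bot (hp i) hdvd hE))

lemma pow_mul_tail_mem_bot (hp : ∀ i, 1 < p i) (hN : 2 ≤ N)
    (h0 : tail p N a b 0 ∈ (⊥ : Subring ℝ)) (k : ℕ) :
    ((∏ i, p i : ℕ) : ℝ) ^ (N ^ (2 * k + 1)) * tail p N a b k ∈ (⊥ : Subring ℝ) := by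
  rw [eq_sub_of_add_eq' (sum_add_tail a b hp hN k), mul_sub, mul_sum]
  refine sub_mem (mul_mem (pow_mem (natCast_mem _ _) _) h0) (Subring.sum_mem _ fun m hm => ?_)
  rw [mem_range] at hm
  exact pow_mul_term_mem_bot a b (fun i => by have := hp i; omega) (by omega)
    (Nat.pow_le_pow_right (by omega) (by omega))

lemma tendsto_pow_mul_tail {P : ℕ} (hP : 2 ≤ P) (hle : ∀ i, P ≤ p i) (hN : 2 ≤ N)
    (hD : ∏ i, p i < P ^ N) :
    Tendsto (fun k => ((∏ i, p i : ℕ) : ℝ) ^ (N ^ (2 * k + 1)) * tail p N a b k) atTop (𝓝 0) := by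
  set D := ∏ i, p i
  set r : ℝ := D / (P : ℝ) ^ N
  have hr1 : r < 1 := by
    rw [div_lt_one (by positivity)]
    exact_mod_cast hD
  have hexp : Tendsto (fun k => N ^ (2 * k + 1)) atTop atTop :=
    tendsto_atTop_mono (fun k => show k ≤ _ from (Nat.lt_pow_self hN).le.trans
      (Nat.pow_le_pow_right (by omega) (by omega))) tendsto_id
  have hlim := ((tendsto_pow_atTop_nhds_zero_of_lt_one (by positivity) hr1).comp hexp).const_mul
    (2 * coeffNorm a b)
  rw [mul_zero] at hlim
  refine squeeze_zero_norm (fun k => ?_) hlim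
  calc ‖(D : ℝ) ^ (N ^ (2 * k + 1)) * tail p N a b k‖
      = (D : ℝ) ^ (N ^ (2 * k + 1)) * |tail p N a b k| := by
        rw [norm_mul, norm_pow, Real.norm_natCast, Real.norm_eq_abs]
    _ ≤ (D : ℝ) ^ (N ^ (2 * k + 1)) * (2 * coeffNorm a b * ((P : ℝ) ^ (N ^ (2 * (k + 1))))⁻¹) := by
        gcongr
        exact abs_tail_le a b hP hle hN k
    _ = 2 * coeffNorm a b * r ^ (N ^ (2 * k + 1)) := by
        rw [div_pow, ← pow_mul, show N * N ^ (2 * k + 1) = N ^ (2 * (k + 1)) by ring]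
        ring

lemma eventually_term_eq_zero {P : ℕ} (hP : 2 ≤ P) (hle : ∀ i, P ≤ p i) (hN : 2 ≤ N)
    (hD : ∏ i, p i < P ^ N) (h0 : tail p N a b 0 ∈ (⊥ : Subring ℝ)) :
    ∀ᶠ k in atTop, term p N a b k = 0 := by
  have hp i : 1 < p i := by have := hle i; omega
  have hD0 : ((∏ i, p i : ℕ) : ℝ) ≠ 0 := by
    exact_mod_cast (prod_pos fun i _ => (by have := hp i; omega : 0 < p i)).ne'
  obtain ⟨k₀, htail⟩ := eventually_atTop.1 <| eventually_eq_zero_of_mul_mem_bot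
    (fun k => pow_ne_zero _ hD0) (pow_mul_tail_mem_bot a b hp hN h0)
    (tendsto_pow_mul_tail a b hP hle hN hD)
  refine eventually_atTop.2 ⟨k₀ + 1, fun k hk => ?_⟩
  obtain ⟨k, rfl⟩ : ∃ j, k = j + 1 := ⟨k - 1, by omega⟩
  rw [term_succ_eq_sub a b hp hN, htail k (by omega), htail (k + 1) (by omega), sub_zero]

end LacunarySum

/-- If integers `a, b, c` satisfy `∑ i (a i * z i + b i * z_{i+q}) = c`,
then for all large enough `k`, `∑ i (a i * p_i^{-N^{2k}} + b i * p_i^{-N^{2k+1}}) = 0`. -/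
theorem stmt4 (q : ℕ) (hq : 2 ≤ q) (p : Fin q → ℕ) (hp1 : ∀ i, 1 < p i)
    (hmono : StrictMono p) (N : ℕ)
    (hN : (q : ℝ) * Real.log (p ⟨q - 1, by omega⟩) / Real.log (p ⟨0, by omega⟩) < (N : ℝ))
    (zA zB : Fin q → ℝ)
    (hzA : ∀ i, zA i = ∑' k : ℕ, ((p i : ℝ) ^ (N ^ (2 * (k + 1))))⁻¹)
    (hzB : ∀ i, zB i = ∑' k : ℕ, ((p i : ℝ) ^ (N ^ (2 * (k + 1) + 1)))⁻¹)
    (a b : Fin q → ℤ) (c : ℤ)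
    (h : ∑ i, ((a i : ℝ) * zA i + (b i : ℝ) * zB i) = (c : ℝ)) :
    ∃ k₀ : ℕ, 1 ≤ k₀ ∧ ∀ k ≥ k₀,
      ∑ i, ((a i : ℝ) * ((p i : ℝ) ^ (N ^ (2 * k)))⁻¹
        + (b i : ℝ) * ((p i : ℝ) ^ (N ^ (2 * k + 1)))⁻¹) = 0 := by
  set pmin := p ⟨0, by omega⟩
  set pmax := p ⟨q - 1, by omega⟩
  have hle i : pmin ≤ p i := hmono.monotone (Fin.mk_le_of_le_val (Nat.zero_le _))
  have hge i : p i ≤ pmax := hmono.monotone (Fin.le_def.2 (by simp; omega))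
  have hlog : 0 < Real.log pmin := Real.log_pos (by exact_mod_cast hp1 _)
  have hpow : pmax ^ q < pmin ^ N := by
    have hpmin : (0 : ℝ) < pmin := by exact_mod_cast (hp1 _).trans' one_pos
    exact_mod_cast pow_lt_pow_of_mul_log_lt (x := (pmax : ℝ)) (y := (pmin : ℝ))
      (hpmin.trans_le (by exact_mod_cast hle _)) hpmin (by rwa [div_lt_iff₀ hlog] at hN)
  have hD : ∏ i, p i < pmin ^ N := by
    refine lt_of_le_of_lt ?_ hpow
    simpa using prod_le_pow_card univ p pmax fun i _ => hge i
  have hqN : q < N := (Nat.pow_lt_pow_iff_right (hp1 _)).1 <|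
    (Nat.pow_le_pow_left (hle _) q).trans_lt hpow
  have htail : LacunarySum.tail p N a b 0 = c := by
    rw [LacunarySum.tail_zero_eq a b hp1 (by omega), ← h]
    simp only [hzA, hzB]
  obtain ⟨k₀, hk₀⟩ := eventually_atTop.1 <|
    LacunarySum.eventually_term_eq_zero a b (hp1 _) hle (by omega) hD (htail ▸ intCast_mem _ c)
  exact ⟨max k₀ 1, le_max_right _ _, fun k hk => hk₀ k (le_of_max_le_left hk)⟩
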